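/- Let G = (g_{jk}) be a 4×4 matrix with entries in the Gaussian integers Z[i] satisfying Gᴴ J G = J and g₄₁ = 0. Then there exist a unit λ ∈ {1, −1, i, −i} of Z[i], Gaussian integers τ₁, τ₂ with |τ₁|² + |τ₂|² an even integer, an even integer t, and a 2×2 matrix U = (u_{jk}) with Uᴴ U = I and all entries in Z[i], such that λ·G equals the matrix with rows (1, −(τ̄₁u₁₁+τ̄₂u₂₁), −(τ̄₁u₁₂+τ̄₂u₂₂), (−|τ₁|²−|τ₂|²+it)/2), (0, u₁₁, u₁₂, τ₁), (0, u₂₁, u₂₂, τ₂), (0, 0, 0, 1). In other words, up to a unit scalar, every element of the stabilizer of infinity in U(3,1;Z[i]) is a Heisenberg translation composed with a Heisenberg rotation, with integral parameters. -/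

import Mathlib

open Matrix Complex

/-- A complex number is a Gaussian integer. -/
def IsGaussInt (z : ℂ) : Prop := ∃ a b : ℤ, z = (a : ℂ) + (b : ℂ) * Complex.I

noncomputable def Jmat : Matrix (Fin 4) (Fin 4) ℂ :=
  !![0,0,0,1; 0,1,0,0; 0,0,1,0; 1,0,0,0]

/-!
Write `g_{jk} = G (j-1) (k-1)`. The `(1,1)` entry of `Gᴴ J G = J` is `|g₂₁|² + |g₃₁|² = 0` once
`g₄₁ = 0`, so the first column is `g₁₁ e₀`; the `(4,1)` entry then reads `conj g₄₄ · g₁₁ = 1`, and over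
`ℤ[i]` this makes `g₁₁` a unit. After scaling by `λ = conj g₁₁ = g₁₁⁻¹`, the remaining entries of
`Gᴴ J G = J` say that the middle block `U` is unitary, that the first row is `-τᴴ U`, and that
`2 Re g₁₄ = -|τ|²`. Writing the Gaussian integer `g₁₄ = p + q i` gives `|τ|² = -2p` and `t = 2q`.
-/

namespace IsGaussInt

lemma mul {z w : ℂ} (hz : IsGaussInt z) (hw : IsGaussInt w) : IsGaussInt (z * w) := by
  obtain ⟨a, b, rfl⟩ := hz
  obtain ⟨c, d, rfl⟩ := hw
  exact ⟨a * c - b * d, a * d + b * c, by push_cast; linear_combination (b * d : ℂ) * I_sq⟩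

lemma conj {z : ℂ} (hz : IsGaussInt z) : IsGaussInt (starRingEnd ℂ z) := by
  obtain ⟨a, b, rfl⟩ := hz
  exact ⟨a, -b, by simp⟩

lemma exists_normSq_eq {z : ℂ} (hz : IsGaussInt z) :
    ∃ a b : ℤ, z = a + b * I ∧ normSq z = a ^ 2 + b ^ 2 := by
  obtain ⟨a, b, rfl⟩ := hz
  exact ⟨a, b, rfl, by simpa using normSq_add_mul_I a b⟩

lemma normSq_eq_one_of_mul_eq_one {z w : ℂ} (hz : IsGaussInt z) (hw : IsGaussInt w)
    (h : w * z = 1) : normSq z = 1 := by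
  obtain ⟨a, b, -, hab⟩ := hz.exists_normSq_eq
  obtain ⟨c, d, -, hcd⟩ := hw.exists_normSq_eq
  have h' : ((c ^ 2 + d ^ 2 : ℤ) : ℝ) * ((a ^ 2 + b ^ 2 : ℤ) : ℝ) = 1 := by
    push_cast
    rw [← hab, ← hcd, ← map_mul, h, map_one]
  rw [hab]
  exact_mod_cast Int.eq_one_of_mul_eq_one_left (by positivity) (by exact_mod_cast h')

lemma eq_unit_of_normSq_eq_one {z : ℂ} (hz : IsGaussInt z) (h : normSq z = 1) :
    z = 1 ∨ z = -1 ∨ z = I ∨ z = -I := by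
  obtain ⟨a, b, rfl, hab⟩ := hz.exists_normSq_eq
  have hab : a ^ 2 + b ^ 2 = 1 := by exact_mod_cast hab ▸ h
  have ha : -1 ≤ a ∧ a ≤ 1 := by constructor <;> nlinarith [sq_nonneg b]
  have hb : -1 ≤ b ∧ b ≤ 1 := by constructor <;> nlinarith [sq_nonneg a]
  obtain ⟨ha₀, ha₁⟩ := ha
  obtain ⟨hb₀, hb₁⟩ := hb
  interval_cases a <;> interval_cases b <;> simp_all

end IsGaussInt

open ComplexConjugate

/-- The product `N_{(τ,t)} M_U` of the Heisenberg translation by `(τ, t)` and the Heisenberg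
rotation by `U`. -/
noncomputable def heisenbergMatrix (τ₁ τ₂ t : ℂ) (U : Matrix (Fin 2) (Fin 2) ℂ) :
    Matrix (Fin 4) (Fin 4) ℂ :=
  !![1, -(conj τ₁ * U 0 0 + conj τ₂ * U 1 0), -(conj τ₁ * U 0 1 + conj τ₂ * U 1 1),
      (-(‖τ₁‖ : ℂ) ^ 2 - (‖τ₂‖ : ℂ) ^ 2 + I * t) / 2;
    0, U 0 0, U 0 1, τ₁;
    0, U 1 0, U 1 1, τ₂;
    0, 0, 0, 1]

def middleBlock (G : Matrix (Fin 4) (Fin 4) ℂ) : Matrix (Fin 2) (Fin 2) ℂ :=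
  !![G 1 1, G 1 2; G 2 1, G 2 2]

lemma conjTranspose_smul_mul_mul_smul {R n : Type*} [Fintype n] [CommRing R] [StarRing R]
    (c : R) (G A : Matrix n n R) : (c • G)ᴴ * A * (c • G) = (star c * c) • (Gᴴ * A * G) := by
  simp only [conjTranspose_smul, Matrix.smul_mul, Matrix.mul_smul, smul_smul]
  rw [mul_comm c]

namespace StabilizerOfInfinity

variable {G : Matrix (Fin 4) (Fin 4) ℂ}

lemma sum_conj_mul_eq_Jmat (hG : Gᴴ * Jmat * G = Jmat) (j k : Fin 4) :
    conj (G 0 j) * G 3 k + conj (G 1 j) * G 1 k + conj (G 2 j) * G 2 k + conj (G 3 j) * G 0 k =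
      Jmat j k := by
  conv_rhs => rw [← hG]
  simp [Matrix.mul_apply, Fin.sum_univ_four, Jmat]
  ring

lemma first_col_tail_eq_zero (hG : Gᴴ * Jmat * G = Jmat) (h30 : G 3 0 = 0) : G 1 0 = 0 ∧ G 2 0 = 0 := by
  have h : ((normSq (G 1 0) + normSq (G 2 0) : ℝ) : ℂ) = 0 := by
    simpa [h30, Jmat, normSq_eq_conj_mul_self] using sum_conj_mul_eq_Jmat hG 0 0
  have h := (add_eq_zero_iff_of_nonneg (normSq_nonneg _) (normSq_nonneg _)).mp
    (by exact_mod_cast h)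
  exact ⟨normSq_eq_zero.mp h.1, normSq_eq_zero.mp h.2⟩

lemma conj_corner_mul_corner_eq_one (hG : Gᴴ * Jmat * G = Jmat) (h30 : G 3 0 = 0) :
    conj (G 3 3) * G 0 0 = 1 := by
  obtain ⟨h10, h20⟩ := first_col_tail_eq_zero hG h30
  simpa [h10, h20, h30, Jmat] using sum_conj_mul_eq_Jmat hG 3 0

lemma last_row_eq (hG : Gᴴ * Jmat * G = Jmat) (h30 : G 3 0 = 0) (h00 : G 0 0 = 1) :
    G 3 1 = 0 ∧ G 3 2 = 0 ∧ G 3 3 = 1 := by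
  obtain ⟨h10, h20⟩ := first_col_tail_eq_zero hG h30
  have h : ∀ j, conj (G 3 j) = Jmat j 0 := fun j => by
    simpa [h10, h20, h30, h00] using sum_conj_mul_eq_Jmat hG j 0
  refine ⟨?_, ?_, ?_⟩ <;> apply (starRingEnd ℂ).injective
  · simpa [Jmat] using h 1
  · simpa [Jmat] using h 2
  · simpa [Jmat] using h 3

lemma middleBlock_conjTranspose_mul_self (hG : Gᴴ * Jmat * G = Jmat) (h30 : G 3 0 = 0)
    (h00 : G 0 0 = 1) :
    (middleBlock G)ᴴ * middleBlock G = 1 := by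
  obtain ⟨h31, h32, -⟩ := last_row_eq hG h30 h00
  have h11 := sum_conj_mul_eq_Jmat hG 1 1
  have h12 := sum_conj_mul_eq_Jmat hG 1 2
  have h21 := sum_conj_mul_eq_Jmat hG 2 1
  have h22 := sum_conj_mul_eq_Jmat hG 2 2
  simp only [h31, h32, map_zero, zero_mul, mul_zero, zero_add, add_zero, Jmat] at h11 h12 h21 h22
  ext i j
  fin_cases i <;> fin_cases j <;>
    simp [middleBlock, Matrix.mul_apply, Fin.sum_univ_two] <;> simpa using ‹_›

lemma norm_sq_add_norm_sq_eq (hG : Gᴴ * Jmat * G = Jmat) (h30 : G 3 0 = 0) (h00 : G 0 0 = 1) :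
    ‖G 1 3‖ ^ 2 + ‖G 2 3‖ ^ 2 = -2 * (G 0 3).re := by
  obtain ⟨-, -, h33⟩ := last_row_eq hG h30 h00
  have h := sum_conj_mul_eq_Jmat hG 3 3
  simp only [h33, map_one, mul_one, one_mul, conj_mul'] at h
  apply ofReal_injective
  push_cast
  rw [re_eq_add_conj]
  simp [Jmat] at h
  linear_combination h

lemma eq_heisenbergMatrix (hG : Gᴴ * Jmat * G = Jmat) (h30 : G 3 0 = 0) (h00 : G 0 0 = 1)
    (t : ℂ) (ht : t = 2 * (G 0 3).im) :
    G = heisenbergMatrix (G 1 3) (G 2 3) t (middleBlock G) := by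
  obtain ⟨h10, h20⟩ := first_col_tail_eq_zero hG h30
  obtain ⟨h31, h32, h33⟩ := last_row_eq hG h30 h00
  have h13 : G 0 1 + G 1 1 * conj (G 1 3) + G 2 1 * conj (G 2 3) = 0 := by
    simpa [h31, h33, Jmat] using congrArg conj (sum_conj_mul_eq_Jmat hG 1 3)
  have h23 : G 0 2 + G 1 2 * conj (G 1 3) + G 2 2 * conj (G 2 3) = 0 := by
    simpa [h32, h33, Jmat] using congrArg conj (sum_conj_mul_eq_Jmat hG 2 3)
  have hnorm : (‖G 1 3‖ : ℂ) ^ 2 + (‖G 2 3‖ : ℂ) ^ 2 = -2 * (G 0 3).re := by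
    exact_mod_cast norm_sq_add_norm_sq_eq hG h30 h00
  ext j k
  fin_cases j <;> fin_cases k <;>
    simp [heisenbergMatrix, middleBlock, h00, h10, h20, h30, h31, h32, h33]
  · linear_combination h13
  · linear_combination h23
  · rw [ht]
    conv_lhs => rw [← re_add_im (G 0 3)]
    linear_combination (1 / 2 : ℂ) * hnorm

end StabilizerOfInfinity

open StabilizerOfInfinity in
/-- Up to a unit scalar, every element of the stabilizer of infinity in
`U(3,1; ℤ[i])` is a Heisenberg translation `N_{(τ,t)}` composed with a
Heisenberg rotation `M_U`, with integral parameters. -/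
theorem stabilizer_langlands_decomposition
    (G : Matrix (Fin 4) (Fin 4) ℂ)
    (hG : Gᴴ * Jmat * G = Jmat)
    (hint : ∀ j k, IsGaussInt (G j k))
    (h41 : G 3 0 = 0) :
    ∃ lam : ℂ, (lam = 1 ∨ lam = -1 ∨ lam = Complex.I ∨ lam = -Complex.I) ∧
    ∃ τ₁ τ₂ : ℂ, IsGaussInt τ₁ ∧ IsGaussInt τ₂ ∧
      (∃ m : ℤ, ‖τ₁‖ ^ 2 + ‖τ₂‖ ^ 2 = 2 * m) ∧
    ∃ t : ℤ, Even t ∧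
    ∃ U : Matrix (Fin 2) (Fin 2) ℂ, Uᴴ * U = 1 ∧ (∀ j k, IsGaussInt (U j k)) ∧
      lam • G =
        !![1,
           -((starRingEnd ℂ) τ₁ * U 0 0 + (starRingEnd ℂ) τ₂ * U 1 0),
           -((starRingEnd ℂ) τ₁ * U 0 1 + (starRingEnd ℂ) τ₂ * U 1 1),
           (-(‖τ₁‖ : ℂ) ^ 2 - (‖τ₂‖ : ℂ) ^ 2 +
             Complex.I * (t : ℂ)) / 2;
         0, U 0 0, U 0 1, τ₁;
         0, U 1 0, U 1 1, τ₂;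
         0, 0, 0, 1] := by
  set lam := conj (G 0 0)
  have hlam_int : IsGaussInt lam := (hint 0 0).conj
  have hlam_normSq : normSq lam = 1 := hlam_int.normSq_eq_one_of_mul_eq_one (hint 3 3) <| by
    simpa using congrArg conj (conj_corner_mul_corner_eq_one hG h41)
  have hlam : conj lam * lam = 1 := by
    rw [← normSq_eq_conj_mul_self, hlam_normSq, ofReal_one]
  set H := lam • G
  have hH : Hᴴ * Jmat * H = Jmat := by
    rw [conjTranspose_smul_mul_mul_smul, hG, star_def, hlam, one_smul]
  have hH30 : H 3 0 = 0 := by simp [H, h41]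
  have hH00 : H 0 0 = 1 := by simpa [H, lam, mul_comm] using hlam
  have hH_int : ∀ j k, IsGaussInt (H j k) := fun j k => hlam_int.mul (hint j k)
  obtain ⟨p, q, hpq⟩ := hH_int 0 3
  refine ⟨lam, hlam_int.eq_unit_of_normSq_eq_one hlam_normSq, H 1 3, H 2 3, hH_int 1 3,
    hH_int 2 3, ⟨-p, ?_⟩, 2 * q, even_two_mul q, middleBlock H,
    middleBlock_conjTranspose_mul_self hH hH30 hH00, ?_, eq_heisenbergMatrix hH hH30 hH00 _ ?_⟩
  · rw [norm_sq_add_norm_sq_eq hH hH30 hH00, hpq]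
    simp
  · intro j k
    fin_cases j <;> fin_cases k <;> exact hH_int _ _
  · simp [hpq]
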